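/- Let s = t_1 ⊕ t_2 ⊕ ... ⊕ t_k be a nonempty score sequence of length n decomposed into its strong summands, and let 1 ≤ j ≤ n-1. Then s+j (entries shifted by j modulo n and sorted) is a score sequence if and only if j = |t_ℓ| + |t_{ℓ+1}| + ... + |t_k| for some ℓ, in which case s+j = t_ℓ ⊕ ... ⊕ t_k ⊕ t_1 ⊕ ... ⊕ t_{ℓ-1}. -/

import Mathlib

/-- A score sequence: nondecreasing, entries in `[0, n-1]`, prefix sums at least
`binom k 2`, and total sum `binom n 2`. -/
def IsScoreSeq (s : List ℕ) : Prop :=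
  s.Pairwise (· ≤ ·) ∧ (∀ x ∈ s, x < s.length) ∧
    (∀ k, 0 < k → k < s.length → k.choose 2 ≤ (s.take k).sum) ∧
    s.sum = s.length.choose 2

/-- A strong score sequence: nonempty and all proper prefix-sum inequalities strict. -/
def IsStrongScoreSeq (s : List ℕ) : Prop :=
  IsScoreSeq s ∧ s ≠ [] ∧ ∀ k, 0 < k → k < s.length → k.choose 2 < (s.take k).sum

/-- Direct sum of score sequences: concatenate `u` with `v` shifted up by `u.length`. -/
def dsum (u v : List ℕ) : List ℕ := u ++ v.map (· + u.length)

/-- Iterated direct sum of a list of score sequences. -/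
def dsumAll (ts : List (List ℕ)) : List ℕ := ts.foldl dsum []

/-- `s + j`: entries shifted by `j`, reduced modulo the length, sorted nondecreasingly. -/
def shift (s : List ℕ) (j : ℕ) : List ℕ :=
  Multiset.sort ((s.map fun x => (x + j) % s.length : List ℕ) : Multiset ℕ) (· ≤ ·)

/-!
Write `n = |s|`. The entries of `s` below `n - j` are raised by `j`, the others wrap around to
`x + j - n`, so `s + j` is the wrapped block followed by the raised one. If `s + j` is a score
sequence, comparing totals shows that exactly `j` entries wrap, and the prefix condition of
`s + j` at `j` forces the prefix inequality of `s` at `n - j` to be an equality. For a direct sum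
of strong score sequences equality occurs only at the boundaries between summands, so `j` is the
length of a tail of summands. Conversely, if `s = P ⊕ Q` with `|Q| = j`, shifting by `j` turns
`P ⊕ Q` into `Q ⊕ P`.
-/

theorem Nat.add_choose_two (a b : ℕ) :
    (a + b).choose 2 = a.choose 2 + b.choose 2 + a * b := by
  simp [Nat.add_choose_eq, Finset.Nat.antidiagonal_succ]; ring

theorem List.sum_map_add_const (l : List ℕ) (c : ℕ) :
    (l.map (· + c)).sum = l.sum + l.length * c := by
  simp [List.sum_map_add]

theorem List.sum_map_sub_const_add {l : List ℕ} {c : ℕ} (h : ∀ x ∈ l, c ≤ x) :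
    (l.map (· - c)).sum + l.length * c = l.sum := by
  have hl : (l.map (· - c)).map (· + c) = l := by
    rw [List.map_map]
    exact (List.map_congr_left fun x hx => Nat.sub_add_cancel (h x hx)).trans (List.map_id _)
  conv_rhs => rw [← hl, List.sum_map_add_const, List.length_map]

theorem List.exists_append_of_pairwise_le {α : Type*} [LinearOrder α] {s : List α}
    (hs : s.Pairwise (· ≤ ·)) (c : α) :
    ∃ a b, s = a ++ b ∧ (∀ x ∈ a, x < c) ∧ ∀ x ∈ b, c ≤ x := by
  induction s with
  | nil => exact ⟨[], [], rfl, by simp, by simp⟩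
  | cons y s ih =>
    obtain ⟨hy, hs⟩ := List.pairwise_cons.mp hs
    by_cases hyc : y < c
    · obtain ⟨a, b, rfl, ha, hb⟩ := ih hs
      exact ⟨y :: a, b, rfl, by simpa [hyc] using ha, hb⟩
    · refine ⟨[], y :: s, rfl, by simp, ?_⟩
      simp only [List.mem_cons, forall_eq_or_imp]
      exact ⟨not_lt.mp hyc, fun x hx => (not_lt.mp hyc).trans (hy x hx)⟩

theorem dsum_nil_left (v : List ℕ) : dsum [] v = v := by simp [dsum]

theorem dsum_assoc (u v w : List ℕ) : dsum (dsum u v) w = dsum u (dsum v w) := by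
  simp only [dsum, List.length_append, List.length_map, List.map_append, List.map_map,
    List.append_assoc]
  congr 2
  exact List.map_congr_left fun x _ => by simp only [Function.comp]; omega

theorem foldl_dsum (u : List ℕ) (ts : List (List ℕ)) :
    ts.foldl dsum u = dsum u (dsumAll ts) := by
  induction ts generalizing u with
  | nil => simp [dsumAll, dsum]
  | cons t ts ih =>
    simp only [dsumAll, List.foldl_cons] at ih ⊢
    rw [ih, ih (dsum [] t), dsum_nil_left, dsum_assoc]

theorem dsumAll_cons (t : List ℕ) (ts : List (List ℕ)) :
    dsumAll (t :: ts) = dsum t (dsumAll ts) := by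
  rw [dsumAll, List.foldl_cons, dsum_nil_left, foldl_dsum]

theorem dsumAll_append (ts ts' : List (List ℕ)) :
    dsumAll (ts ++ ts') = dsum (dsumAll ts) (dsumAll ts') := by
  rw [dsumAll, List.foldl_append, foldl_dsum]; rfl

theorem length_dsum (u v : List ℕ) : (dsum u v).length = u.length + v.length := by
  simp [dsum]

theorem length_dsumAll (ts : List (List ℕ)) :
    (dsumAll ts).length = (ts.map List.length).sum := by
  induction ts with
  | nil => rfl
  | cons t ts ih => simp [dsumAll_cons, length_dsum, ih]

theorem sum_dsum (u v : List ℕ) : (dsum u v).sum = u.sum + v.sum + v.length * u.length := by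
  rw [dsum, List.sum_append, List.sum_map_add_const, add_assoc]

theorem take_dsum_of_le {u : List ℕ} (v : List ℕ) {k : ℕ} (hk : k ≤ u.length) :
    (dsum u v).take k = u.take k :=
  List.take_append_of_le_length hk

theorem take_dsum_length_add (u v : List ℕ) (i : ℕ) :
    (dsum u v).take (u.length + i) = dsum u (v.take i) := by
  rw [dsum, List.take_length_add_append, ← List.map_take, dsum]

theorem isScoreSeq_nil : IsScoreSeq [] := by
  simp [IsScoreSeq]

theorem IsScoreSeq.sum_take_ge {s : List ℕ} (hs : IsScoreSeq s) {k : ℕ} (hk : k ≤ s.length) :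
    k.choose 2 ≤ (s.take k).sum := by
  rcases Nat.eq_zero_or_pos k with rfl | hk0
  · simp
  rcases hk.lt_or_eq with hlt | rfl
  · exact hs.2.2.1 k hk0 hlt
  · rw [List.take_length, hs.2.2.2]

theorem IsScoreSeq.dsum {u v : List ℕ} (hu : IsScoreSeq u) (hv : IsScoreSeq v) :
    IsScoreSeq (dsum u v) := by
  refine ⟨?_, ?_, fun k _ hk => ?_, ?_⟩
  · refine List.pairwise_append.mpr ⟨hu.1, hv.1.map _ fun a b h => by omega, ?_⟩
    intro x hx y hy
    obtain ⟨z, -, rfl⟩ := List.mem_map.mp hy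
    have := hu.2.1 x hx; omega
  · intro x hx
    rw [length_dsum]
    rcases List.mem_append.mp hx with hx | hx
    · have := hu.2.1 x hx; omega
    · obtain ⟨z, hz, rfl⟩ := List.mem_map.mp hx
      have := hv.2.1 z hz; omega
  · rw [length_dsum] at hk
    rcases le_or_gt k u.length with hku | hku
    · rw [take_dsum_of_le v hku]; exact hu.sum_take_ge hku
    · obtain ⟨i, rfl⟩ := Nat.exists_eq_add_of_le hku.le
      have hi : (v.take i).length = i := List.length_take_of_le (by omega)
      rw [take_dsum_length_add, sum_dsum, hi, hu.2.2.2, Nat.add_choose_two]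
      have := hv.sum_take_ge (k := i) (by omega)
      nlinarith
  · rw [length_dsum, sum_dsum, Nat.add_choose_two, hu.2.2.2, hv.2.2.2, mul_comm]

theorem IsScoreSeq.dsumAll {ts : List (List ℕ)} (h : ∀ t ∈ ts, IsScoreSeq t) :
    IsScoreSeq (dsumAll ts) := by
  induction ts with
  | nil => exact isScoreSeq_nil
  | cons t ts ih =>
    rw [dsumAll_cons]
    exact (h t (by simp)).dsum (ih fun t' ht' => h t' (by simp [ht']))

theorem IsStrongScoreSeq.length_le_of_sum_take_dsum_eq {u : List ℕ} (hu : IsStrongScoreSeq u)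
    (v : List ℕ) {k : ℕ} (hk0 : 0 < k) (htight : ((dsum u v).take k).sum = k.choose 2) :
    u.length ≤ k := by
  by_contra! hlt
  rw [take_dsum_of_le v hlt.le] at htight
  exact (hu.2.2 k hk0 hlt).ne htight.symm

theorem exists_eq_sum_take_of_sum_take_dsumAll_eq {ts : List (List ℕ)}
    (hts : ∀ t ∈ ts, IsStrongScoreSeq t) {k : ℕ} (hk : k ≤ (dsumAll ts).length)
    (htight : ((dsumAll ts).take k).sum = k.choose 2) :
    ∃ ℓ, k = ((ts.take ℓ).map List.length).sum := by
  induction ts generalizing k with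
  | nil => exact ⟨0, by simpa [dsumAll] using hk⟩
  | cons t ts ih =>
    rcases Nat.eq_zero_or_pos k with rfl | hk0
    · exact ⟨0, rfl⟩
    have ht := hts t (by simp)
    rw [dsumAll_cons] at hk htight
    obtain ⟨i, rfl⟩ := Nat.exists_eq_add_of_le (ht.length_le_of_sum_take_dsum_eq _ hk0 htight)
    rw [length_dsum] at hk
    have hi : ((dsumAll ts).take i).length = i := List.length_take_of_le (by omega)
    rw [take_dsum_length_add, sum_dsum, hi, ht.1.2.2.2, Nat.add_choose_two] at htight
    obtain ⟨ℓ, rfl⟩ := ih (fun t' ht' => hts t' (by simp [ht'])) (k := i) (by omega)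
      (by rw [mul_comm] at htight; omega)
    exact ⟨ℓ + 1, by simp⟩

theorem length_shift (s : List ℕ) (j : ℕ) : (shift s j).length = s.length := by
  simp [shift]

theorem shift_eq_of_perm {s L : List ℕ} {j : ℕ} (hL : L.Pairwise (· ≤ ·))
    (hp : L.Perm (s.map fun x => (x + j) % s.length)) : shift s j = L := by
  rw [shift, ← Multiset.coe_eq_coe.mpr hp, Multiset.coe_sort, List.mergeSort_eq_self _ hL]

theorem shift_append {a b : List ℕ} {c j : ℕ} (hlen : (a ++ b).length = c + j)
    (hs : (a ++ b).Pairwise (· ≤ ·)) (ha : ∀ x ∈ a, x < c)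
    (hb : ∀ x ∈ b, c ≤ x ∧ x < c + j) :
    shift (a ++ b) j = b.map (· - c) ++ a.map (· + j) := by
  obtain ⟨ha_sorted, hb_sorted, -⟩ := List.pairwise_append.mp hs
  apply shift_eq_of_perm
  · refine List.pairwise_append.mpr ⟨hb_sorted.map _ fun x y h => by omega,
      ha_sorted.map _ fun x y h => by omega, ?_⟩
    simp only [List.mem_map]
    rintro _ ⟨x, hx, rfl⟩ _ ⟨y, -, rfl⟩
    have := hb x hx
    omega
  · rw [hlen, List.map_append]
    refine List.perm_append_comm.trans (List.Perm.append ?_ ?_)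
    · refine .of_eq <| List.map_congr_left fun x hx => ?_
      exact (Nat.mod_eq_of_lt (by have := ha x hx; omega)).symm
    · refine .of_eq <| List.map_congr_left fun x hx => ?_
      have := hb x hx
      rw [show x + j = x - c + (c + j) by omega, Nat.add_mod_right, Nat.mod_eq_of_lt (by omega)]

theorem shift_dsum {u v : List ℕ} (hu : IsScoreSeq u) (hv : IsScoreSeq v) :
    shift (dsum u v) v.length = dsum v u := by
  rw [dsum, shift_append (c := u.length) (by simp) (hu.dsum hv).1 hu.2.1,
    List.map_map]
  · simp [dsum, Function.comp_def]
  · simp only [List.mem_map]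
    rintro _ ⟨y, hy, rfl⟩
    have := hv.2.1 y hy
    omega

theorem IsScoreSeq.sum_take_eq_choose_of_isScoreSeq_shift {s : List ℕ} (hs : IsScoreSeq s)
    {j : ℕ} (hj0 : 0 < j) (hjn : j < s.length) (hshift : IsScoreSeq (shift s j)) :
    (s.take (s.length - j)).sum = (s.length - j).choose 2 := by
  set c := s.length - j
  have hcj : s.length = c + j := by omega
  obtain ⟨a, b, rfl, ha, hb⟩ := List.exists_append_of_pairwise_le hs.1 c
  have hb' : ∀ x ∈ b, c ≤ x ∧ x < c + j :=
    fun x hx => ⟨hb x hx, hcj ▸ hs.2.1 x (List.mem_append_right a hx)⟩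
  have hshift_eq := shift_append hcj hs.1 ha hb'
  have hlen : a.length + b.length = c + j := by rw [← List.length_append, hcj]
  have hsum := hs.2.2.2
  rw [hcj, Nat.add_choose_two, List.sum_append] at hsum
  have hwrap := List.sum_map_sub_const_add hb
  have htotal : (b.map (· - c)).sum + (a.sum + a.length * j) = a.sum + b.sum := by
    rw [← List.sum_map_add_const, ← List.sum_append, ← hshift_eq, hshift.2.2.2, length_shift,
      ← List.sum_append, hs.2.2.2]
  have hbj : b.length = j :=
    Nat.eq_of_mul_eq_mul_right (show 0 < c + j by omega) (by nlinarith)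
  have hta : (a ++ b).take c = a := List.take_left' (by omega)
  have ha_ge := hs.sum_take_ge (k := c) (by omega)
  have hb_ge := hshift.sum_take_ge (k := j) (by rw [length_shift]; omega)
  rw [hshift_eq, List.take_left' (by simp [hbj])] at hb_ge
  rw [hta] at ha_ge ⊢
  rw [hbj] at hwrap
  linarith

theorem shift_scoreSeq_iff_rotation_general (ts : List (List ℕ)) (hts : ∀ t ∈ ts, IsStrongScoreSeq t)
    (s : List ℕ) (hs : s = dsumAll ts)
    (j : ℕ) (hj1 : 1 ≤ j) (hj2 : j ≤ s.length - 1) :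
    (IsScoreSeq (shift s j) ↔
      ∃ ℓ < ts.length, j = ((ts.drop ℓ).map List.length).sum) ∧
    (∀ ℓ < ts.length, j = ((ts.drop ℓ).map List.length).sum →
      shift s j = dsumAll (ts.drop ℓ ++ ts.take ℓ)) := by
  subst hs
  have hscore : ∀ t ∈ ts, IsScoreSeq t := fun t ht => (hts t ht).1
  have hlength (ℓ : ℕ) : ((ts.take ℓ).map List.length).sum
      + ((ts.drop ℓ).map List.length).sum = (dsumAll ts).length := by
    rw [length_dsumAll, ← List.sum_append, ← List.map_append, List.take_append_drop]
  have hrotation (ℓ : ℕ) (hj : j = ((ts.drop ℓ).map List.length).sum) :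
      shift (dsumAll ts) j = dsumAll (ts.drop ℓ ++ ts.take ℓ) := by
    have := shift_dsum
      (IsScoreSeq.dsumAll (ts := ts.take ℓ) fun t ht => hscore t (List.mem_of_mem_take ht))
      (IsScoreSeq.dsumAll (ts := ts.drop ℓ) fun t ht => hscore t (List.mem_of_mem_drop ht))
    rwa [← dsumAll_append, ← dsumAll_append, List.take_append_drop, length_dsumAll, ← hj] at this
  refine ⟨⟨fun hshift => ?_, ?_⟩, fun ℓ _ => hrotation ℓ⟩
  · have htight := (IsScoreSeq.dsumAll hscore).sum_take_eq_choose_of_isScoreSeq_shift hj1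
      (by omega) hshift
    obtain ⟨ℓ, hℓ⟩ := exists_eq_sum_take_of_sum_take_dsumAll_eq hts (by omega) htight
    have hℓlt : ℓ < ts.length := by
      by_contra! hℓ_ge
      rw [List.take_of_length_le hℓ_ge, ← length_dsumAll] at hℓ
      omega
    exact ⟨ℓ, hℓlt, by have := hlength ℓ; omega⟩
  · rintro ⟨ℓ, -, hj⟩
    rw [hrotation ℓ hj]
    exact IsScoreSeq.dsumAll fun t ht => hscore t <| (List.mem_append.mp ht).elim
      List.mem_of_mem_drop List.mem_of_mem_take

/-- For `s` decomposed into strong summands `ts`, `s+j` is a score sequence iff `j`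
is the total length of a suffix of summands, in which case `s+j` is that rotation. -/
theorem shift_scoreSeq_iff_rotation (ts : List (List ℕ)) (hts : ∀ t ∈ ts, IsStrongScoreSeq t)
    (htsne : ts ≠ []) (s : List ℕ) (hs : s = dsumAll ts)
    (j : ℕ) (hj1 : 1 ≤ j) (hj2 : j ≤ s.length - 1) :
    (IsScoreSeq (shift s j) ↔
      ∃ ℓ < ts.length, j = ((ts.drop ℓ).map List.length).sum) ∧
    (∀ ℓ < ts.length, j = ((ts.drop ℓ).map List.length).sum →
      shift s j = dsumAll (ts.drop ℓ ++ ts.take ℓ)) :=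
  shift_scoreSeq_iff_rotation_general ts hts s hs j hj1 hj2
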